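/- Let P22(n) be the set of partitions λ of n with smallest part at least 2 and with λ_1 = λ_2, and let N22(n) = Σ_{λ∈P22(n)} n(λ) where n(λ) = Σ_i (i−1)λ_i. Then 8·N22(n) ≤ n(n+1)·|P22(n)|. -/

import Mathlib

/-- The descending list of parts of a partition. -/
def Nat.Partition.descParts {n : ℕ} (P : n.Partition) : List ℕ :=
  (P.parts.sort (· ≤ ·)).reverse

/-- `n(λ) = Σ_{i≥1} (i-1)λ_i` for a partition `λ` listed in decreasing order. -/
def Nat.Partition.nval {n : ℕ} (P : n.Partition) : ℕ :=
  (List.zipWith (· * ·) (List.range P.descParts.length) P.descParts).sum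

/-- `N(n) = Σ_{λ ⊢ n} n(λ)`. -/
def Nfun (n : ℕ) : ℕ := ∑ P : Nat.Partition n, P.nval

/-- `p(n)`, the number of partitions of `n`. -/
def pfun (n : ℕ) : ℕ := Fintype.card (Nat.Partition n)

/-!
Conjugation is an involution of `P22(n)`: a smallest part `≥ 2` in `λ` is the same as a repeated
largest part in `λ'`. Hence `8·N22(n) = Σ 4(n(λ) + n(λ'))`, and since `2n(λ') + n = Σ λᵢ²` it
suffices to show `4n(λ) + 2Σ λᵢ² ≤ n² + 3n` for every `λ ∈ P22(n)`. Induction on the number of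
parts gives this up to a surplus `x² - 3x`, `x` the largest part, provided all other parts are
`≥ 2`; the surplus is absorbed when the largest part occurs twice.
-/

namespace List

def nval (l : List ℕ) : ℕ := (zipWith (· * ·) (range l.length) l).sum

theorem sum_zipWith_succ_mul {r l : List ℕ} (h : l.length ≤ r.length) :
    (zipWith (fun i x => (i + 1) * x) r l).sum = (zipWith (· * ·) r l).sum + l.sum := by
  induction l generalizing r with
  | nil => simp
  | cons x l ih =>
    cases r with
    | nil => simp at h
    | cons i r =>
      simp only [zipWith_cons_cons, sum_cons, ih (by simpa using h)]
      ring

theorem nval_cons (x : ℕ) (l : List ℕ) : nval (x :: l) = nval l + l.sum := by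
  rw [nval, nval, length_cons, range_succ_eq_map, zipWith_cons_cons, zipWith_map_left, sum_cons,
    zero_mul, zero_add]
  exact sum_zipWith_succ_mul (by simp)

theorem nval_map_range (f : ℕ → ℕ) (m : ℕ) :
    nval ((range m).map f) = ∑ k ∈ Finset.range m, k * f k := by
  rw [nval, length_map, length_range, zipWith_map_right, zipWith_self]
  rfl

theorem four_mul_nval_cons_add_le {x : ℕ} {l : List ℕ} (hs : (x :: l).Pairwise (· ≥ ·))
    (h2 : ∀ p ∈ l, 2 ≤ p) :
    4 * nval (x :: l) + 2 * ((x :: l).map (· ^ 2)).sum + 3 * x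
      ≤ (x :: l).sum ^ 2 + 3 * (x :: l).sum + x ^ 2 := by
  induction l generalizing x with
  | nil => simp [nval]; linarith
  | cons y t ih =>
    obtain ⟨hxy, hyt⟩ := pairwise_cons.1 hs
    have hyx : y ≤ x := hxy y mem_cons_self
    have hy2 : 2 ≤ y := h2 y mem_cons_self
    have ih := ih hyt fun p hp => h2 p (mem_cons_of_mem y hp)
    have hyS : y ≤ (y :: t).sum := by simp
    rw [nval_cons x, map_cons, sum_cons (a := x ^ 2), sum_cons (a := x)]
    generalize nval (y :: t) = W, ((y :: t).map (· ^ 2)).sum = Q, (y :: t).sum = S at *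
    nlinarith [Nat.mul_le_mul (Nat.sub_le_sub_right hyx 2) hyS]

theorem four_mul_nval_cons_cons_add_le {a : ℕ} {l : List ℕ}
    (hs : (a :: a :: l).Pairwise (· ≥ ·)) (h2 : ∀ p ∈ a :: l, 2 ≤ p) :
    4 * nval (a :: a :: l) + 2 * ((a :: a :: l).map (· ^ 2)).sum
      ≤ (a :: a :: l).sum ^ 2 + 3 * (a :: a :: l).sum := by
  have ha := h2 a mem_cons_self
  have key := four_mul_nval_cons_add_le (pairwise_cons.1 hs).2
    fun p hp => h2 p (mem_cons_of_mem a hp)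
  have haS : a ≤ (a :: l).sum := by simp
  rw [nval_cons a (a :: l), map_cons, sum_cons (a := a ^ 2), sum_cons (a := a) (l := a :: l)]
  generalize nval (a :: l) = W, ((a :: l).map (· ^ 2)).sum = Q, (a :: l).sum = S at *
  nlinarith

theorem exists_eq_cons_cons_of_two_le_count {α : Type*} [LinearOrder α] {a : α} {L : List α}
    (hs : L.Pairwise (· ≥ ·)) (hle : ∀ x ∈ L, x ≤ a) (hc : 2 ≤ L.count a) :
    ∃ l, L = a :: a :: l := by
  rcases L with _ | ⟨x, _ | ⟨y, l⟩⟩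
  · simp at hc
  · rw [count_singleton] at hc
    split at hc <;> omega
  · have hmem : a ∈ y :: l := count_pos_iff.1 (by rw [count_cons] at hc; split at hc <;> omega)
    obtain ⟨hx, hy⟩ := pairwise_cons.1 hs
    have hya : a ≤ y := (mem_cons.1 hmem).elim le_of_eq ((pairwise_cons.1 hy).1 a)
    have hxa : a ≤ x := hya.trans (hx y mem_cons_self)
    exact ⟨l, by rw [le_antisymm (hle x (by simp)) hxa, le_antisymm (hle y (by simp)) hya]⟩

end List

theorem Finset.sum_range_two_mul_add_one (p : ℕ) : ∑ k ∈ range p, (2 * k + 1) = p ^ 2 := by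
  induction p with
  | zero => rfl
  | succ p ih => rw [sum_range_succ, ih]; ring

namespace Multiset

def countGT (k : ℕ) (s : Multiset ℕ) : ℕ := card (s.filter (k < ·))

variable {s t : Multiset ℕ}

theorem countGT_anti (s : Multiset ℕ) : Antitone (countGT · s) := fun _ _ hjk =>
  card_le_card (monotone_filter_right s fun _ hp => lt_of_le_of_lt hjk hp)

theorem countGT_pos_iff {k : ℕ} : 0 < countGT k s ↔ k < s.sup := by
  rw [← not_iff_not, not_lt, not_lt, Nat.le_zero, countGT, card_eq_zero, filter_eq_nil,
    Multiset.sup_le]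
  simp only [not_lt]

theorem countGT_cons (k p : ℕ) (s : Multiset ℕ) :
    countGT k (p ::ₘ s) = countGT k s + if k < p then 1 else 0 := by
  simp only [countGT, ← countP_eq_card_filter, countP_cons]

theorem count_add_countGT_succ (a : ℕ) (s : Multiset ℕ) :
    count (a + 1) s + countGT (a + 1) s = countGT a s := by
  induction s using Multiset.induction with
  | empty => simp [countGT]
  | cons p s ih =>
    rw [count_cons, countGT_cons, countGT_cons]
    split_ifs <;> omega

theorem count_le_countGT {a k : ℕ} (h : k < a) (s : Multiset ℕ) : count a s ≤ countGT k s := by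
  rw [count_eq_card_filter_eq, countGT]
  exact card_le_card (monotone_filter_right s fun p hp => hp ▸ h)

theorem sum_range_mul_countGT (f : ℕ → ℕ) {m : ℕ} (hs : ∀ p ∈ s, p ≤ m) :
    ∑ k ∈ Finset.range m, f k * countGT k s = (s.map fun p => ∑ k ∈ Finset.range p, f k).sum := by
  induction s using Multiset.induction with
  | empty => simp [countGT]
  | cons p s ih =>
    have hpm : p ≤ m := hs p (mem_cons_self p s)
    simp only [countGT_cons, mul_add, Finset.sum_add_distrib, map_cons, sum_cons,
      ih fun q hq => hs q (mem_cons_of_mem hq), mul_ite, mul_one, mul_zero, Finset.sum_ite,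
      Finset.sum_const_zero, add_zero]
    rw [add_comm, show (Finset.range m).filter (· < p) = Finset.range p by ext; simp; omega]

theorem eq_of_countGT_eq (hs : 0 ∉ s) (ht : 0 ∉ t) (h : ∀ k, countGT k s = countGT k t) :
    s = t := by
  ext a
  cases a with
  | zero => rw [count_eq_zero_of_notMem hs, count_eq_zero_of_notMem ht]
  | succ a =>
    have hs := count_add_countGT_succ a s
    have ht := count_add_countGT_succ a t
    rw [h, h] at hs
    omega

def conjugate (s : Multiset ℕ) : Multiset ℕ := (range s.sup).map (countGT · s)

theorem countGT_conjugate (j : ℕ) (s : Multiset ℕ) :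
    countGT j s.conjugate = ((Finset.range s.sup).filter (j < countGT · s)).card := by
  rw [countGT, conjugate, filter_map, card_map]
  rfl

theorem lt_countGT_iff_lt_countGT_conjugate {j k : ℕ} :
    j < countGT k s ↔ k < countGT j s.conjugate := by
  rw [countGT_conjugate]
  constructor
  · intro h
    have hk : k < s.sup := countGT_pos_iff.1 (by omega)
    calc k < (Finset.range (k + 1)).card := by simp
      _ ≤ _ := Finset.card_le_card fun i hi => by
        simp only [Finset.mem_range] at hi
        simp only [Finset.mem_filter, Finset.mem_range]
        exact ⟨by omega, lt_of_lt_of_le h (countGT_anti s (by omega))⟩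
  · intro h
    by_contra! hk
    have : ((Finset.range s.sup).filter (j < countGT · s)) ⊆ Finset.range k := fun i hi => by
      simp only [Finset.mem_filter, Finset.mem_range] at hi ⊢
      by_contra! hki
      have : countGT i s ≤ countGT k s := countGT_anti s hki
      omega
    simpa using h.trans_le (Finset.card_le_card this)

theorem zero_notMem_conjugate (s : Multiset ℕ) : 0 ∉ s.conjugate := by
  simp only [conjugate, mem_map, mem_range, not_exists, not_and]
  intro k hk h
  exact (countGT_pos_iff.2 hk).ne' h

theorem conjugate_conjugate (hs : 0 ∉ s) : s.conjugate.conjugate = s := by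
  refine eq_of_countGT_eq (zero_notMem_conjugate _) hs fun k => eq_of_forall_lt_iff fun j => ?_
  rw [← lt_countGT_iff_lt_countGT_conjugate (s := s.conjugate),
    ← lt_countGT_iff_lt_countGT_conjugate]

theorem sum_conjugate (s : Multiset ℕ) : s.conjugate.sum = s.sum := by
  have := sum_range_mul_countGT (fun _ => 1) (fun p hp => le_sup hp) (s := s)
  simp only [one_mul, Finset.sum_const, Finset.card_range, smul_eq_mul, mul_one, map_id'] at this
  rw [← this]
  rfl

theorem sup_conjugate (s : Multiset ℕ) : s.conjugate.sup = countGT 0 s := by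
  refine le_antisymm (Multiset.sup_le.2 ?_) ?_
  · simp only [conjugate, mem_map]
    rintro _ ⟨k, -, rfl⟩
    exact countGT_anti s k.zero_le
  · rcases (countGT 0 s).eq_zero_or_pos with h | h
    · exact h.le.trans bot_le
    · exact le_sup (mem_map_of_mem _ (mem_range.2 (countGT_pos_iff.1 h)))

def IsP22 (s : Multiset ℕ) : Prop := (∀ p ∈ s, 2 ≤ p) ∧ 2 ≤ s.count s.sup

theorem IsP22.conjugate (h : IsP22 s) : IsP22 s.conjugate := by
  obtain ⟨h2, hc⟩ := h
  have hsup : 2 ≤ s.sup := h2 _ (count_pos.1 (by omega))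
  have h01 : countGT 1 s = countGT 0 s := by
    have := count_add_countGT_succ 0 s
    rw [zero_add, count_eq_zero_of_notMem fun h1 => by simpa using h2 1 h1] at this
    omega
  refine ⟨?_, ?_⟩
  · simp only [Multiset.conjugate, mem_map, mem_range]
    rintro _ ⟨k, hk, rfl⟩
    exact hc.trans (count_le_countGT hk s)
  · rw [sup_conjugate, Multiset.conjugate, count_map]
    calc 2 = card (range 2) := (card_range 2).symm
      _ ≤ _ := card_le_card <| le_filter.2 ⟨range_le.2 hsup, fun k hk => by
          rcases mem_range.1 hk with _ | _ <;> simp_all⟩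

end Multiset

namespace Nat.Partition

open Multiset

variable {n : ℕ}

def conjugate (P : n.Partition) : n.Partition where
  parts := P.parts.conjugate
  parts_pos hi := Nat.pos_of_ne_zero fun h => zero_notMem_conjugate _ (h ▸ hi)
  parts_sum := by rw [sum_conjugate, P.parts_sum]

theorem conjugate_conjugate (P : n.Partition) : P.conjugate.conjugate = P :=
  Nat.Partition.ext (Multiset.conjugate_conjugate fun h => (P.parts_pos h).false)

theorem descParts_pairwise (P : n.Partition) : P.descParts.Pairwise (· ≥ ·) :=
  List.pairwise_reverse.2 (pairwise_sort _ _)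

theorem coe_descParts (P : n.Partition) : (P.descParts : Multiset ℕ) = P.parts := by
  rw [descParts, coe_reverse, sort_eq]

theorem descParts_eq_of_pairwise (P : n.Partition) {l : List ℕ} (hl : l.Pairwise (· ≥ ·))
    (h : (l : Multiset ℕ) = P.parts) : P.descParts = l :=
  (coe_eq_coe.1 (P.coe_descParts.trans h.symm)).eq_of_pairwise' P.descParts_pairwise hl

theorem descParts_conjugate (P : n.Partition) :
    P.conjugate.descParts = (List.range P.parts.sup).map (countGT · P.parts) :=
  P.conjugate.descParts_eq_of_pairwise
    ((List.pairwise_lt_range).map _ fun _ _ h => countGT_anti P.parts h.le)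
    (by rw [← map_coe, coe_range]; rfl)

theorem mem_descParts (P : n.Partition) {x : ℕ} : x ∈ P.descParts ↔ x ∈ P.parts := by
  rw [← mem_coe, coe_descParts]

theorem nval_eq_list_nval (P : n.Partition) : P.nval = P.descParts.nval := rfl

theorem two_mul_nval_conjugate_add (P : n.Partition) :
    2 * P.conjugate.nval + n = (P.parts.map (· ^ 2)).sum := by
  have hnval : P.conjugate.nval = ∑ k ∈ Finset.range P.parts.sup, k * countGT k P.parts := by
    rw [nval_eq_list_nval, descParts_conjugate, List.nval_map_range]
  have hn : ∑ k ∈ Finset.range P.parts.sup, countGT k P.parts = n := P.conjugate.parts_sum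
  have hsplit : ∑ k ∈ Finset.range P.parts.sup, (2 * k + 1) * countGT k P.parts
      = 2 * ∑ k ∈ Finset.range P.parts.sup, k * countGT k P.parts
        + ∑ k ∈ Finset.range P.parts.sup, countGT k P.parts := by
    rw [Finset.mul_sum, ← Finset.sum_add_distrib]
    exact Finset.sum_congr rfl fun k _ => by ring
  rw [sum_range_mul_countGT _ fun p hp => le_sup hp] at hsplit
  simp only [Finset.sum_range_two_mul_add_one] at hsplit
  omega

theorem four_mul_nval_add_four_mul_nval_conjugate_le {P : n.Partition} (hP : IsP22 P.parts) :
    4 * P.nval + 4 * P.conjugate.nval ≤ n * (n + 1) := by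
  obtain ⟨l, hl⟩ := List.exists_eq_cons_cons_of_two_le_count P.descParts_pairwise
    (fun x hx => le_sup (P.mem_descParts.1 hx))
    (by rw [← coe_count, coe_descParts]; exact hP.2)
  have hbound := List.four_mul_nval_cons_cons_add_le (hl ▸ P.descParts_pairwise) fun p hp =>
    hP.1 p (P.mem_descParts.1 (hl ▸ List.mem_cons_of_mem _ hp))
  have hsum : P.descParts.sum = n := by rw [← sum_coe, coe_descParts, P.parts_sum]
  have hsq := P.two_mul_nval_conjugate_add
  rw [← coe_descParts, map_coe, sum_coe] at hsq
  rw [← hl, hsum] at hbound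
  rw [nval_eq_list_nval]
  nlinarith

end Nat.Partition

/-- `8·N22(n) ≤ n(n+1)·p22(n)`, where the sum ranges over partitions of `n`
with smallest part `≥ 2` and the two largest parts equal. -/
theorem N22_le (n : ℕ) :
    8 * ∑ P ∈ Finset.univ.filter
        (fun P : Nat.Partition n => (∀ p ∈ P.parts, 2 ≤ p) ∧ 2 ≤ P.parts.count P.parts.sup),
        P.nval
      ≤ n * (n + 1) * (Finset.univ.filter
        (fun P : Nat.Partition n => (∀ p ∈ P.parts, 2 ≤ p) ∧ 2 ≤ P.parts.count P.parts.sup)).card := by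
  set S := Finset.univ.filter
    fun P : Nat.Partition n => (∀ p ∈ P.parts, 2 ≤ p) ∧ 2 ≤ P.parts.count P.parts.sup
  have hS : ∀ P ∈ S, P.conjugate ∈ S := fun P hP =>
    Finset.mem_filter.2 ⟨Finset.mem_univ _, Multiset.IsP22.conjugate (Finset.mem_filter.1 hP).2⟩
  have hreindex : ∑ P ∈ S, P.conjugate.nval = ∑ P ∈ S, P.nval :=
    Finset.sum_nbij' _ _ hS hS (fun P _ => P.conjugate_conjugate)
      (fun P _ => P.conjugate_conjugate) fun _ _ => rfl
  calc 8 * ∑ P ∈ S, P.nval = ∑ P ∈ S, (4 * P.nval + 4 * P.conjugate.nval) := by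
        rw [Finset.sum_add_distrib, ← Finset.mul_sum, ← Finset.mul_sum, hreindex]; ring
    _ ≤ ∑ _P ∈ S, n * (n + 1) := Finset.sum_le_sum fun P hP =>
        Nat.Partition.four_mul_nval_add_four_mul_nval_conjugate_le (Finset.mem_filter.1 hP).2
    _ = n * (n + 1) * S.card := by rw [Finset.sum_const, smul_eq_mul, mul_comm]
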